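/- arXiv:2402.07941 — 3 statements merged into one kernel-verified Lean document; each statement's English description precedes it below -/
import Mathlib

section
/- Let k ≥ 0, Q ≥ 1, q ≥ 2 and N be integers with gcd(q,Q)=1 and N ≥ 2q, and let a be an integer coprime to q. Then V_k(Q;q,a) = Σ_{(r_1,…,r_k)} ∏_{i=1}^k (μ(r_i)/φ(r_i)) · Σ_{(b_1,…,b_k)} ∏_{i=1}^k E_{q,a}(b_i/r_i), where the outer sum runs over all k-tuples of divisors r_i of Q with r_i > 1, the inner sum runs over all k-tuples of residues b_i mod r_i with gcd(b_i,r_i)=1 and b_1/r_1 + ⋯ + b_k/r_k ∈ ℤ, and μ is the Möbius function. -/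
open Finset Filter

/-- Integers `1 ≤ n ≤ N` with `n ≡ a (mod q)`. -/
def progSet (N q a : ℕ) : Finset ℕ := (Finset.Icc 1 N).filter (fun n => n % q = a % q)

/-- The exponential sum `E_{q,a}(α) = Σ_{1≤n≤N, n≡a (q)} e(nα)`. -/
noncomputable def Eqa (N q a : ℕ) (α : ℝ) : ℂ :=
  ∑ n ∈ progSet N q a, Complex.exp (2 * Real.pi * Complex.I * (n : ℂ) * (α : ℂ))

/-- The moment `V_k(Q;q,a)` of the count of reduced residues mod `Q`
in the progression `a (mod q)`. -/
noncomputable def Vk (N q a Q k : ℕ) : ℝ :=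
  (1 / (Q : ℝ)) * ∑ m ∈ Finset.range Q,
    (∑ n ∈ progSet N q a,
      (((Q : ℝ) / Q.totient) * (if Nat.gcd (n + m) Q = 1 then 1 else 0) - 1)) ^ k

/-! Möbius inversion and additive characters give the expansion
`(Q/φ(Q)) 1_{(x,Q)=1} = Σ_{r ∣ Q} μ(r)/φ(r) Σ_{b mod r, (b,r)=1} e(xb/r)`:
write `1_{(x,Q)=1} = Σ_{d ∣ (x,Q)} μ(d)`, detect `d ∣ x` by `(1/d) Σ_{b mod d} e(xb/d)`, and
regroup the fractions `b/d` by their reduced denominator `r`; the weight collected by `r` is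
`Σ_{r ∣ d ∣ Q} μ(d)/d = (φ(Q)/Q) μ(r)/φ(r)`. The term `r = 1` is the `1` subtracted in `V_k`,
so the inner sum of `V_k` at shift `m` is a trigonometric polynomial in `m` with frequencies
`b/r` and coefficients `μ(r)/φ(r) E_{q,a}(b/r)`. Expanding its `k`-th power and averaging over
`m mod Q` keeps exactly the `k`-tuples of frequencies whose sum is an integer. -/

open ArithmeticFunction Real FourierTransform
open scoped ArithmeticFunction.Moebius Nat

theorem Nat.sum_divisors_filter_dvd {M : Type*} [AddCommMonoid M] {r n : ℕ} (hr : r ≠ 0)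
    (f : ℕ → M) : ∑ d ∈ (r * n).divisors with r ∣ d, f d = ∑ e ∈ n.divisors, f (r * e) := by
  have hinj : Set.InjOn (r * ·) n.divisors := fun _ _ _ _ h =>
    Nat.eq_of_mul_eq_mul_left (Nat.pos_of_ne_zero hr) h
  rw [← sum_image hinj]
  congr 1
  ext d
  simp only [mem_filter, mem_image, Nat.mem_divisors]
  constructor
  · rintro ⟨⟨hd, hrn⟩, e, rfl⟩
    exact ⟨e, ⟨Nat.dvd_of_mul_dvd_mul_left (Nat.pos_of_ne_zero hr) hd,
      right_ne_zero_of_mul hrn⟩, rfl⟩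
  · rintro ⟨e, ⟨he, hn⟩, rfl⟩
    exact ⟨⟨mul_dvd_mul_left r he, mul_ne_zero hr hn⟩, dvd_mul_right r e⟩

theorem Nat.sum_divisors_sum_divisors_comm {M : Type*} [AddCommMonoid M] (Q : ℕ)
    (f : ℕ → ℕ → M) :
    ∑ d ∈ Q.divisors, ∑ r ∈ d.divisors, f d r =
      ∑ r ∈ Q.divisors, ∑ d ∈ Q.divisors with r ∣ d, f d r :=
  sum_comm' fun d r => by
    simp only [mem_filter, Nat.mem_divisors]
    constructor
    · rintro ⟨⟨hdQ, hQ⟩, hrd, -⟩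
      exact ⟨⟨⟨hdQ, hQ⟩, hrd⟩, hrd.trans hdQ, hQ⟩
    · rintro ⟨⟨⟨hdQ, hQ⟩, hrd⟩, -⟩
      exact ⟨⟨hdQ, hQ⟩, hrd, fun h => hQ (Nat.eq_zero_of_zero_dvd (h ▸ hdQ))⟩

namespace ArithmeticFunction

theorem sum_divisors_moebius {R : Type*} [Ring R] (n : ℕ) :
    ∑ d ∈ n.divisors, (μ d : R) = if n = 1 then 1 else 0 := by
  have h : ∑ d ∈ n.divisors, μ d = if n = 1 then 1 else 0 := by
    simpa only [coe_mul_zeta_apply, one_apply] using congr_arg (· n) moebius_mul_coe_zeta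
  rw [← Int.cast_sum, h]
  split_ifs <;> simp

theorem ite_coprime_eq_sum_moebius {R : Type*} [Ring R] {Q : ℕ} (hQ : Q ≠ 0) (x : ℕ) :
    (if x.gcd Q = 1 then 1 else 0 : R) = ∑ d ∈ Q.divisors with d ∣ x, (μ d : R) := by
  have hdiv : {d ∈ Q.divisors | d ∣ x} = (x.gcd Q).divisors := by
    rw [← Nat.divisors_filter_dvd_of_dvd hQ (Nat.gcd_dvd_right x Q)]
    exact filter_congr fun d hd => by
      rw [Nat.dvd_gcd_iff, and_iff_left (Nat.dvd_of_mem_divisors hd)]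
  rw [hdiv, sum_divisors_moebius]

theorem moebius_mul_eq_ite (m n : ℕ) :
    μ (m * n) = if m.Coprime n then μ m * μ n else 0 := by
  split_ifs with h
  · exact isMultiplicative_moebius.map_mul_of_coprime h
  · exact moebius_eq_zero_of_not_squarefree fun hsq => h (Nat.coprime_of_squarefree_mul hsq)

theorem IsMultiplicative.sum_divisors_moebius_mul {R : Type*} [CommRing R]
    {f : ArithmeticFunction R} (hf : f.IsMultiplicative) {n : ℕ} (hn : n ≠ 0) :
    ∑ d ∈ n.divisors, μ d * f d = ∏ p ∈ n.primeFactors, (1 - f p) := by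
  set rad := ∏ p ∈ n.primeFactors, p
  have hprime : ∀ p ∈ n.primeFactors, p.Prime := fun p hp => Nat.prime_of_mem_primeFactors hp
  have hrad : Squarefree rad :=
    Finset.squarefree_prod_of_pairwise_isCoprime
      (fun p hp q hq hpq => Nat.coprime_iff_isRelPrime.1 <|
        (Nat.coprime_primes (hprime p hp) (hprime q hq)).2 hpq)
      fun p hp => (hprime p hp).squarefree
  rw [← Nat.primeFactors_prod hprime, hf.prodPrimeFactors_one_sub_of_squarefree _ hrad]
  refine (sum_subset (Nat.divisors_subset_of_dvd hn (Nat.prod_primeFactors_dvd n))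
    fun d hd hd_rad => ?_).symm
  -- a squarefree divisor of `n` is the product of its prime factors, hence divides `rad`
  suffices ¬ Squarefree d by rw [moebius_eq_zero_of_not_squarefree this, Int.cast_zero, zero_mul]
  intro hsq
  refine hd_rad (Nat.mem_divisors.2
    ⟨?_, Finset.prod_ne_zero_iff.2 fun p hp => (hprime p hp).ne_zero⟩)
  rw [← Nat.prod_primeFactors_of_squarefree hsq]
  exact prod_dvd_prod_of_subset _ _ _ (Nat.primeFactors_mono (Nat.dvd_of_mem_divisors hd) hn)

def coprimeInv (K : Type*) [DivisionRing K] (r : ℕ) : ArithmeticFunction K :=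
  ⟨fun e => if r.Coprime e then (e : K)⁻¹ else 0, by simp⟩

theorem coprimeInv_apply {K : Type*} [DivisionRing K] (r e : ℕ) :
    coprimeInv K r e = if r.Coprime e then (e : K)⁻¹ else 0 := rfl

theorem isMultiplicative_coprimeInv (K : Type*) [Field K] (r : ℕ) :
    (coprimeInv K r).IsMultiplicative := by
  refine IsMultiplicative.iff_ne_zero.2 ⟨by simp [coprimeInv_apply], fun {m n} _ _ _ => ?_⟩
  simp only [coprimeInv_apply, Nat.coprime_mul_iff_right, Nat.cast_mul, mul_inv]
  split_ifs <;> simp_all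

theorem prod_primeFactors_one_sub_coprimeInv {r M : ℕ} (hr : r ≠ 0) (hM : M ≠ 0) :
    ∏ p ∈ M.primeFactors, (1 - coprimeInv ℚ r p) =
      ∏ p ∈ (r * M).primeFactors, (1 - coprimeInv ℚ r p) := by
  refine prod_subset (Nat.primeFactors_mono (dvd_mul_left M r) (mul_ne_zero hr hM))
    fun p hp hpM => ?_
  obtain ⟨hp, hprM, -⟩ := Nat.mem_primeFactors.1 hp
  have hpr : p ∣ r := (hp.dvd_mul.1 hprM).resolve_right
    fun h => hpM (Nat.mem_primeFactors.2 ⟨hp, h, hM⟩)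
  have : ¬ r.Coprime p := fun h => hp.one_lt.ne' (Nat.Coprime.eq_one_of_dvd h.symm hpr)
  simp [coprimeInv_apply, this]

theorem totient_div_eq_prod_one_sub_coprimeInv_mul {r M : ℕ} (hr : r ≠ 0) (hM : M ≠ 0) :
    (φ (r * M) : ℚ) / (r * M : ℕ) =
      (∏ p ∈ (r * M).primeFactors, (1 - coprimeInv ℚ r p)) * (φ r / r) := by
  have hrM : r * M ≠ 0 := mul_ne_zero hr hM
  have hsub : r.primeFactors ⊆ (r * M).primeFactors :=
    Nat.primeFactors_mono (dvd_mul_right r M) hrM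
  rw [Nat.totient_eq_mul_prod_factors, Nat.totient_eq_mul_prod_factors,
    mul_div_cancel_left₀ _ (by exact_mod_cast hrM), mul_div_cancel_left₀ _ (by exact_mod_cast hr),
    ← inter_eq_right.2 hsub, ← prod_ite_mem, ← prod_mul_distrib]
  refine prod_congr rfl fun p hp => ?_
  have hp := Nat.prime_of_mem_primeFactors hp
  by_cases hpr : p ∣ r
  · have : ¬ r.Coprime p := fun h => hp.one_lt.ne' (Nat.Coprime.eq_one_of_dvd h.symm hpr)
    simp [coprimeInv_apply, this, Nat.mem_primeFactors, hp, hpr, hr]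
  · have : r.Coprime p := Nat.coprime_comm.1 ((Nat.Prime.coprime_iff_not_dvd hp).2 hpr)
    simp [coprimeInv_apply, this, Nat.mem_primeFactors, hpr]

/-- Writing `d = r e`, the summand is `μ(r)/r · μ(e) [(r,e)=1]/e`, and the sum over `e` of this
multiplicative function against `μ` is an Euler product. -/
theorem sum_divisors_filter_dvd_moebius_div {Q r : ℕ} (hQ : Q ≠ 0) (hr : r ∣ Q) :
    ∑ d ∈ Q.divisors with r ∣ d, (μ d : ℚ) / d = (φ Q / Q) * (μ r / φ r) := by
  obtain ⟨M, rfl⟩ := hr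
  have hr0 : r ≠ 0 := left_ne_zero_of_mul hQ
  have hM0 : M ≠ 0 := right_ne_zero_of_mul hQ
  have hsplit : ∀ e, (μ (r * e) : ℚ) / (r * e : ℕ) = μ r / r * (μ e * coprimeInv ℚ r e) := by
    intro e
    rw [moebius_mul_eq_ite, coprimeInv_apply]
    split_ifs <;> push_cast <;> ring
  rw [Nat.sum_divisors_filter_dvd hr0, sum_congr rfl fun e _ => hsplit e, ← mul_sum,
    (isMultiplicative_coprimeInv ℚ r).sum_divisors_moebius_mul hM0,
    prod_primeFactors_one_sub_coprimeInv hr0 hM0,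
    totient_div_eq_prod_one_sub_coprimeInv_mul hr0 hM0]
  have : (φ r : ℚ) ≠ 0 := by exact_mod_cast (Nat.totient_pos.2 (Nat.pos_of_ne_zero hr0)).ne'
  field_simp

end ArithmeticFunction

theorem Real.fourierChar_eq_one_iff {x : ℝ} : 𝐞 x = 1 ↔ ∃ n : ℤ, x = n := by
  rw [fourierChar_apply', Circle.exp_eq_one]
  refine exists_congr fun n => ?_
  rw [mul_comm (n : ℝ), mul_right_inj' (by positivity)]

theorem Real.fourierChar_natCast_mul (m : ℕ) (x : ℝ) :
    (𝐞 (m * x) : ℂ) = (𝐞 x : ℂ) ^ m := by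
  rw [← nsmul_eq_mul, AddChar.map_nsmul_eq_pow, Circle.coe_pow]

theorem Real.fourierChar_sum {ι : Type*} (s : Finset ι) (f : ι → ℝ) :
    (𝐞 (∑ i ∈ s, f i) : ℂ) = ∏ i ∈ s, (𝐞 (f i) : ℂ) := by
  classical
  induction s using Finset.induction_on with
  | empty => simp
  | insert i s hi ih =>
    rw [sum_insert hi, prod_insert hi, AddChar.map_add_eq_mul, Circle.coe_mul, ih]

theorem sum_range_fourierChar_mul {Q : ℕ} {x : ℚ} (hx : ∃ t : ℤ, (Q : ℚ) * x = t) :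
    ∑ m ∈ range Q, (𝐞 (m * x) : ℂ) = if x.den = 1 then (Q : ℂ) else 0 := by
  simp_rw [fourierChar_natCast_mul]
  split_ifs with hden
  · have : 𝐞 (x : ℝ) = 1 := fourierChar_eq_one_iff.2 ⟨x.num, by
      rw [← (Rat.den_eq_one_iff x).1 hden]; simp⟩
    simp [this]
  · obtain ⟨t, ht⟩ := hx
    have hne : (𝐞 x : ℂ) ≠ 1 := by
      rw [Ne, Circle.coe_eq_one, fourierChar_eq_one_iff]
      rintro ⟨n, hn⟩
      have hxn : x = n := by exact_mod_cast hn
      exact hden (hxn ▸ Rat.den_intCast n)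
    have hroot : (𝐞 x : ℂ) ^ Q = 1 := by
      rw [← fourierChar_natCast_mul, Circle.coe_eq_one, fourierChar_eq_one_iff]
      exact ⟨t, by exact_mod_cast ht⟩
    rw [geom_sum_eq hne, hroot, sub_self, zero_div]

theorem ite_dvd_eq_sum_fourierChar {d : ℕ} (hd : d ≠ 0) (x : ℕ) :
    (if d ∣ x then 1 else 0 : ℂ) = (d : ℂ)⁻¹ * ∑ b ∈ range d, (𝐞 (x * (b / d)) : ℂ) := by
  have hsum := sum_range_fourierChar_mul (Q := d) (x := (x : ℚ) / d) ⟨x, by field_simp; simp⟩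
  simp only [Rat.den_div_natCast_eq_one_iff x d hd] at hsum
  have hd' : (d : ℂ) ≠ 0 := by exact_mod_cast hd
  simp_rw [show ∀ b : ℕ, (x : ℝ) * (b / d) = b * ((x / d : ℚ) : ℝ) from
    fun b => by push_cast; ring, hsum]
  split_ifs <;> simp [hd']

theorem sum_range_prod_fourierChar {ι : Type*} {Q : ℕ} (s : Finset ι) (r b : ι → ℕ)
    (hr : ∀ i ∈ s, r i ∣ Q) :
    ∑ m ∈ range Q, ∏ i ∈ s, (𝐞 (m * (b i / r i)) : ℂ) =
      if (∑ i ∈ s, (b i : ℚ) / r i).den = 1 then (Q : ℂ) else 0 := by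
  have hint : (Q : ℚ) * ∑ i ∈ s, (b i : ℚ) / r i = ((∑ i ∈ s, b i * (Q / r i) : ℕ) : ℚ) := by
    push_cast
    rw [mul_sum]
    refine sum_congr rfl fun i hi => ?_
    rw [Nat.cast_div_charZero (hr i hi)]
    ring
  rw [← sum_range_fourierChar_mul ⟨_, hint.trans (Int.cast_natCast _).symm⟩]
  refine sum_congr rfl fun m _ => ?_
  rw [← fourierChar_sum]
  push_cast
  rw [mul_sum]

theorem sum_range_div_eq_sum_divisors {M : Type*} [AddCommMonoid M] (F : ℝ → M) (d : ℕ) :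
    ∑ b ∈ range d, F (b / d) =
      ∑ r ∈ d.divisors, ∑ b ∈ range r with b.gcd r = 1, F (b / r) := by
  rw [← Nat.sum_div_divisors d, ← sum_fiberwise_of_maps_to (g := d.gcd) (t := d.divisors)
    fun b hb => Nat.mem_divisors.2 ⟨Nat.gcd_dvd_left d b, Nat.ne_zero_of_lt (mem_range.1 hb)⟩]
  refine sum_congr rfl fun g hg => ?_
  obtain ⟨c, rfl⟩ := Nat.dvd_of_mem_divisors hg
  have hg0 : 0 < g := Nat.pos_of_mem_divisors hg
  rw [Nat.mul_div_cancel_left c hg0]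
  symm
  refine sum_bij (fun b _ => g * b) ?_ ?_ ?_ ?_
  · simp only [mem_filter, mem_range]
    rintro b ⟨hb, hbc⟩
    exact ⟨by gcongr, by rw [Nat.gcd_mul_left, Nat.gcd_comm, hbc, mul_one]⟩
  · intro a _ b _ h
    exact Nat.eq_of_mul_eq_mul_left hg0 h
  · simp only [mem_filter, mem_range]
    rintro b ⟨hb, hbg⟩
    obtain ⟨b', rfl⟩ : g ∣ b := hbg ▸ Nat.gcd_dvd_right _ _
    refine ⟨b', ⟨(mul_lt_mul_iff_right₀ hg0).1 hb, ?_⟩, rfl⟩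
    rwa [Nat.gcd_mul_left, mul_eq_left₀ hg0.ne', Nat.gcd_comm] at hbg
  · intro b _
    push_cast
    rw [mul_div_mul_left _ _ (by exact_mod_cast hg0.ne')]

theorem ramanujan_expansion {Q : ℕ} (hQ : Q ≠ 0) (x : ℕ) :
    (Q / φ Q : ℂ) * (if x.gcd Q = 1 then 1 else 0) =
      ∑ r ∈ Q.divisors,
        (μ r / φ r : ℂ) * ∑ b ∈ range r with b.gcd r = 1, (𝐞 (x * (b / r)) : ℂ) := by
  have hφQ : (φ Q : ℂ) ≠ 0 := by
    exact_mod_cast (Nat.totient_pos.2 (Nat.pos_of_ne_zero hQ)).ne'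
  have hcoeff : ∀ r ∈ Q.divisors,
      (μ r / φ r : ℂ) = (Q / φ Q) * ∑ d ∈ Q.divisors with r ∣ d, (μ d : ℂ) / d := by
    intro r hr
    have h := congrArg (Rat.cast : ℚ → ℂ)
      (sum_divisors_filter_dvd_moebius_div hQ (Nat.dvd_of_mem_divisors hr))
    push_cast at h
    rw [h]
    field_simp
  calc (Q / φ Q : ℂ) * (if x.gcd Q = 1 then 1 else 0)
      = (Q / φ Q) * ∑ d ∈ Q.divisors,
          (μ d / d : ℂ) * ∑ b ∈ range d, (𝐞 (x * (b / d)) : ℂ) := by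
        rw [ite_coprime_eq_sum_moebius hQ, sum_filter]
        congr 1
        refine sum_congr rfl fun d hd => ?_
        rw [← mul_boole, ite_dvd_eq_sum_fourierChar (Nat.pos_of_mem_divisors hd).ne' x]
        ring
    _ = (Q / φ Q) * ∑ d ∈ Q.divisors, ∑ r ∈ d.divisors,
          (μ d / d : ℂ) * ∑ b ∈ range r with b.gcd r = 1, (𝐞 (x * (b / r)) : ℂ) := by
        simp_rw [sum_range_div_eq_sum_divisors (fun y => (𝐞 (x * y) : ℂ)), mul_sum]
    _ = _ := by
        rw [Nat.sum_divisors_sum_divisors_comm, mul_sum]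
        refine sum_congr rfl fun r hr => ?_
        rw [hcoeff r hr, ← sum_mul, mul_assoc]

theorem ramanujan_expansion_sub_one {Q : ℕ} (hQ : Q ≠ 0) (x : ℕ) :
    (Q / φ Q : ℂ) * (if x.gcd Q = 1 then 1 else 0) - 1 =
      ∑ r ∈ Q.divisors with 1 < r,
        (μ r / φ r : ℂ) * ∑ b ∈ range r with b.gcd r = 1, (𝐞 (x * (b / r)) : ℂ) := by
  have hone : {r ∈ Q.divisors | ¬ 1 < r} = {1} := by
    ext r
    simp only [mem_filter, Nat.mem_divisors, mem_singleton, not_lt]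
    constructor
    · rintro ⟨⟨hrQ, -⟩, hr⟩
      have : r ≠ 0 := by rintro rfl; exact hQ (Nat.eq_zero_of_zero_dvd hrQ)
      omega
    · rintro rfl
      exact ⟨⟨one_dvd Q, hQ⟩, le_rfl⟩
  rw [ramanujan_expansion hQ, ← sum_filter_add_sum_filter_not _ (1 < ·), hone, sum_singleton]
  simp

theorem sum_sub_one_eq_sum_ramanujan {Q : ℕ} (hQ : Q ≠ 0) (A : Finset ℕ) (m : ℕ) :
    ∑ n ∈ A, ((Q / φ Q : ℂ) * (if (n + m).gcd Q = 1 then 1 else 0) - 1) =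
      ∑ r ∈ Q.divisors with 1 < r, (μ r / φ r : ℂ) * ∑ b ∈ range r with b.gcd r = 1,
        (𝐞 (m * (b / r)) : ℂ) * ∑ n ∈ A, (𝐞 (n * (b / r)) : ℂ) := by
  simp_rw [ramanujan_expansion_sub_one hQ, mul_sum]
  rw [sum_comm]
  refine sum_congr rfl fun r _ => ?_
  rw [sum_comm]
  refine sum_congr rfl fun b _ => sum_congr rfl fun n _ => ?_
  rw [Nat.cast_add, add_mul, AddChar.map_add_eq_mul, Circle.coe_mul]
  ring

theorem Finset.pow_sum_mul_sum {R α β : Type*} [CommSemiring R] [DecidableEq α] [DecidableEq β]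
    (k : ℕ) (D : Finset α) (B : α → Finset β) (f : α → R) (g : α → β → R) :
    (∑ r ∈ D, f r * ∑ b ∈ B r, g r b) ^ k =
      ∑ ρ ∈ Fintype.piFinset fun _ : Fin k => D,
        (∏ i, f (ρ i)) * ∑ β ∈ Fintype.piFinset fun i => B (ρ i), ∏ i, g (ρ i) (β i) := by
  rw [← Fin.prod_const, prod_univ_sum]
  refine sum_congr rfl fun ρ _ => ?_
  rw [prod_mul_distrib, prod_univ_sum]

theorem average_pow_sum_fourierChar {Q : ℕ} (hQ : Q ≠ 0) (k : ℕ) {D : Finset ℕ}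
    (hD : ∀ r ∈ D, r ∣ Q) (B : ℕ → Finset ℕ) (c : ℕ → ℂ) (G : ℝ → ℂ) :
    (Q : ℂ)⁻¹ * ∑ m ∈ range Q,
        (∑ r ∈ D, c r * ∑ b ∈ B r, (𝐞 (m * (b / r)) : ℂ) * G (b / r)) ^ k =
      ∑ ρ ∈ Fintype.piFinset fun _ : Fin k => D, (∏ i, c (ρ i)) *
        ∑ β ∈ Fintype.piFinset (fun i => B (ρ i)) with (∑ i, (β i : ℚ) / ρ i).den = 1,
          ∏ i, G (β i / ρ i) := by
  simp_rw [pow_sum_mul_sum, prod_mul_distrib]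
  rw [sum_comm, mul_sum]
  refine sum_congr rfl fun ρ hρ => ?_
  have hρQ : ∀ i ∈ univ, ρ i ∣ Q := fun i _ => hD _ (Fintype.mem_piFinset.1 hρ i)
  calc (Q : ℂ)⁻¹ * ∑ m ∈ range Q, (∏ i, c (ρ i)) * ∑ β ∈ Fintype.piFinset fun i => B (ρ i),
          (∏ i, (𝐞 (m * (β i / ρ i)) : ℂ)) * ∏ i, G (β i / ρ i)
      = (∏ i, c (ρ i)) * ∑ β ∈ Fintype.piFinset fun i => B (ρ i),
          ((Q : ℂ)⁻¹ * ∑ m ∈ range Q, ∏ i, (𝐞 (m * (β i / ρ i)) : ℂ)) *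
            ∏ i, G (β i / ρ i) := by
        simp only [mul_sum, sum_mul]
        rw [sum_comm]
        exact sum_congr rfl fun _ _ => sum_congr rfl fun _ _ => by ring
    _ = _ := by
        simp_rw [sum_range_prod_fourierChar _ _ _ hρQ, sum_filter]
        congr 1
        refine sum_congr rfl fun β _ => ?_
        split_ifs <;> simp [hQ]

theorem Eqa_eq_sum_fourierChar (N q a : ℕ) (α : ℝ) :
    Eqa N q a α = ∑ n ∈ progSet N q a, (𝐞 (n * α) : ℂ) :=
  sum_congr rfl fun n _ => by
    rw [fourierChar_apply]
    push_cast
    ring_nf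

theorem Vk_eq_sum_over_tuples_general (k Q q N a : ℕ) (hQ : 1 ≤ Q) :
    (Vk N q a Q k : ℂ) =
      ∑ r ∈ Fintype.piFinset (fun _ : Fin k => Q.divisors.filter (fun d => 1 < d)),
        (∏ i, ((ArithmeticFunction.moebius (r i) : ℂ) / ((r i).totient : ℂ))) *
          ∑ b ∈ (Fintype.piFinset (fun i : Fin k =>
              (Finset.range (r i)).filter (fun b => Nat.gcd b (r i) = 1))).filter
              (fun b => (∑ i, (b i : ℚ) / (r i : ℚ)).den = 1),
            ∏ i, Eqa N q a ((b i : ℝ) / (r i : ℝ)) := by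
  have hQ0 : Q ≠ 0 := Nat.one_le_iff_ne_zero.1 hQ
  have hVk : (Vk N q a Q k : ℂ) = (Q : ℂ)⁻¹ * ∑ m ∈ range Q, (∑ n ∈ progSet N q a,
      ((Q / φ Q : ℂ) * (if (n + m).gcd Q = 1 then 1 else 0) - 1)) ^ k := by
    simp only [Vk]
    push_cast
    simp [apply_ite]
  simp_rw [hVk, sum_sub_one_eq_sum_ramanujan hQ0, ← Eqa_eq_sum_fourierChar]
  exact average_pow_sum_fourierChar hQ0 k
    (fun r hr => Nat.dvd_of_mem_divisors (mem_filter.1 hr).1) _ _ _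

/-- Fourier expansion of the moments of reduced residues in a progression
to a large modulus (Lemma 2.1). -/
theorem Vk_eq_sum_over_tuples (k Q q N a : ℕ) (hQ : 1 ≤ Q) (hq : 2 ≤ q)
    (hqQ : Nat.gcd q Q = 1) (hN : 2 * q ≤ N) (ha : Nat.gcd a q = 1) :
    (Vk N q a Q k : ℂ) =
      ∑ r ∈ Fintype.piFinset (fun _ : Fin k => Q.divisors.filter (fun d => 1 < d)),
        (∏ i, ((ArithmeticFunction.moebius (r i) : ℂ) / ((r i).totient : ℂ))) *
          ∑ b ∈ (Fintype.piFinset (fun i : Fin k =>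
              (Finset.range (r i)).filter (fun b => Nat.gcd b (r i) = 1))).filter
              (fun b => (∑ i, (b i : ℚ) / (r i : ℚ)).den = 1),
            ∏ i, Eqa N q a ((b i : ℝ) / (r i : ℝ)) :=
  Vk_eq_sum_over_tuples_general k Q q N a hQ
end

section
/- Let N ≥ 1, q ≥ 2 and r ≥ 1 be integers with gcd(q,r)=1, and let a be an integer coprime to q. Then Σ_{b mod r, gcd(b,r)=1} |E_{q,a}(b/r)|² = φ(r)·H + 2 Σ_{1≤m≤H} (H − m)·c_r(qm), where H := #{1 ≤ n ≤ N : n ≡ a (mod q)}. -/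
open Finset Filter

/-- The Ramanujan sum `c_r(n)`. -/
noncomputable def ramanujanC (r n : ℕ) : ℂ :=
  ∑ b ∈ (Finset.range r).filter (fun b => Nat.gcd b r = 1),
    Complex.exp (2 * Real.pi * Complex.I * (b : ℂ) * (n : ℂ) / (r : ℂ))

/-! Expanding `|E_{q,a}(b/r)|²` over pairs of terms `a % q + q j`, `a % q + q j'` of the
progression (`j, j' < H`) and summing over `b` first, each pair contributes
`Σ_b e(b q (j - j') / r)`, which is even in `j - j'` because `b ↦ -b` permutes the reduced
residues; the `H - m` pairs with `j - j' = m`, and as many with `j - j' = -m`, give the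
formula. -/

open Complex Real ComplexConjugate

theorem sum_range_sum_range_sub_of_even {R : Type*} [CommRing R] (g : ℤ → R)
    (hg : ∀ d, g (-d) = g d) (K : ℕ) :
    ∑ j ∈ range K, ∑ j' ∈ range K, g (j - j') =
      K * g 0 + 2 * ∑ m ∈ Icc 1 K, ((K : R) - m) * g m := by
  induction K with
  | zero => simp
  | succ K ih =>
    have last_column : ∑ j ∈ range K, g (j - K) = ∑ m ∈ Icc 1 K, g m := by
      rw [← Ico_add_one_right_eq_Icc, sum_Ico_eq_sum_range, ← sum_range_reflect]
      refine sum_congr rfl fun j hj => ?_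
      rw [← hg]
      congr 1
      have := mem_range.mp hj
      omega
    have last_row : ∑ j' ∈ range K, g (K - j') = ∑ m ∈ Icc 1 K, g m := by
      rw [← last_column]
      exact sum_congr rfl fun j _ => by rw [← hg, neg_sub]
    simp only [sum_range_succ, sum_add_distrib, sub_self, ih, last_column, last_row,
      sum_Icc_succ_top (Nat.le_add_left 1 K), Nat.cast_add, Nat.cast_one]
    rw [show ∑ m ∈ Icc 1 K, ((K : R) + 1 - m) * g m
        = ∑ m ∈ Icc 1 K, ((K : R) - m) * g m + ∑ m ∈ Icc 1 K, g m by
      rw [← sum_add_distrib]; exact sum_congr rfl fun m _ => by ring]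
    ring

noncomputable def unitRoot (r : ℕ) : ℂ := Complex.exp (2 * π * I / r)

theorem unitRoot_pow_self (r : ℕ) : unitRoot r ^ r = 1 := by
  rcases eq_or_ne r 0 with rfl | hr
  · exact pow_zero _
  · exact (Complex.isPrimitiveRoot_exp r hr).pow_eq_one

theorem norm_unitRoot (r : ℕ) : ‖unitRoot r‖ = 1 := by
  simp [unitRoot, Complex.norm_exp, Complex.div_re]

theorem unitRoot_pow_pow (r b n : ℕ) :
    (unitRoot r ^ b) ^ n = Complex.exp (2 * π * I * b * n / r) := by
  rw [unitRoot, ← Complex.exp_nat_mul, ← Complex.exp_nat_mul]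
  congr 1
  ring

def coprimeResidues (r : ℕ) : Finset ℕ := (range r).filter (fun b => Nat.gcd b r = 1)

theorem card_coprimeResidues (r : ℕ) : (coprimeResidues r).card = r.totient := by
  rw [Nat.totient_eq_card_coprime, coprimeResidues]
  exact congrArg card (filter_congr fun b _ => Nat.coprime_comm)

theorem sub_mod_mem_coprimeResidues {r b : ℕ} (hb : b ∈ coprimeResidues r) :
    (r - b) % r ∈ coprimeResidues r := by
  simp only [coprimeResidues, mem_filter, mem_range] at hb ⊢
  refine ⟨Nat.mod_lt _ (by omega), ?_⟩
  rw [← Nat.gcd_rec, Nat.gcd_comm, Nat.gcd_self_sub_left hb.1.le]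
  exact hb.2

theorem sum_coprimeResidues_sub_mod {M : Type*} [AddCommMonoid M] (r : ℕ) (f : ℕ → M) :
    ∑ b ∈ coprimeResidues r, f ((r - b) % r) = ∑ b ∈ coprimeResidues r, f b := by
  have involutive : ∀ b ∈ coprimeResidues r, (r - (r - b) % r) % r = b := by
    intro b hb
    have hbr : b < r := mem_range.mp (mem_filter.mp hb).1
    rcases Nat.eq_zero_or_pos b with rfl | hb0
    · simp
    · rw [Nat.mod_eq_of_lt (by omega : r - b < r), Nat.sub_sub_self hbr.le, Nat.mod_eq_of_lt hbr]
  exact sum_nbij' _ _ (fun b hb => sub_mod_mem_coprimeResidues hb)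
    (fun b hb => sub_mod_mem_coprimeResidues hb) involutive involutive (fun _ _ => rfl)

theorem sum_coprimeResidues_zpow_neg {K : Type*} [DivisionRing K] {r : ℕ} {z : K}
    (hz : z ^ r = 1) (d : ℤ) :
    ∑ b ∈ coprimeResidues r, (z ^ b) ^ (-d) = ∑ b ∈ coprimeResidues r, (z ^ b) ^ d := by
  rw [← sum_coprimeResidues_sub_mod r]
  refine sum_congr rfl fun b hb => ?_
  have hbr : b ≤ r := (mem_range.mp (mem_filter.mp hb).1).le
  have pow_sub_mod : z ^ ((r - b) % r) = (z ^ b)⁻¹ := by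
    rw [← pow_eq_pow_mod _ hz]
    exact eq_inv_of_mul_eq_one_left (by rw [pow_sub_mul_pow z hbr, hz])
  rw [pow_sub_mod, inv_zpow', neg_neg]

theorem sum_pow_mul_conj_sum_pow {z : ℂ} (hz : ‖z‖ = 1) (n₀ q K : ℕ) :
    (∑ j ∈ range K, z ^ (n₀ + q * j)) * conj (∑ j ∈ range K, z ^ (n₀ + q * j)) =
      ∑ j ∈ range K, ∑ j' ∈ range K, z ^ ((q : ℤ) * (j - j')) := by
  have hz0 : z ≠ 0 := norm_ne_zero_iff.mp (by rw [hz]; exact one_ne_zero)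
  rw [map_sum, sum_mul_sum]
  refine sum_congr rfl fun j _ => sum_congr rfl fun j' _ => ?_
  rw [map_pow, ← inv_eq_conj hz, ← zpow_natCast, ← zpow_natCast, inv_zpow', ← zpow_add₀ hz0]
  congr 1
  push_cast
  ring

theorem progSet_eq_map {N q a : ℕ} (hq : 0 < q) (ha : a % q ≠ 0) :
    progSet N q a = (range ((N + q - a % q) / q)).map
      ⟨(a % q + q * ·), (add_right_injective _).comp (mul_right_injective₀ hq.ne')⟩ := by
  have hlt : a % q < q := Nat.mod_lt a hq
  have mem_range_iff : ∀ j, j < (N + q - a % q) / q ↔ a % q + q * j ≤ N := fun j => by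
    rw [Nat.lt_iff_add_one_le, Nat.le_div_iff_mul_le hq, add_one_mul, mul_comm j]
    omega
  ext n
  simp only [progSet, mem_filter, mem_Icc, Finset.mem_map, mem_range, Function.Embedding.coeFn_mk,
    mem_range_iff]
  constructor
  · rintro ⟨⟨hn1, hnN⟩, hn⟩
    have := Nat.mod_add_div n q
    exact ⟨n / q, by omega, by omega⟩
  · rintro ⟨j, hj, rfl⟩
    refine ⟨⟨by omega, hj⟩, ?_⟩
    simp [Nat.add_mul_mod_self_left]

theorem Eqa_div_eq_sum_range {N q a : ℕ} (hq : 0 < q) (ha : a % q ≠ 0) (r b : ℕ) :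
    Eqa N q a (b / r) = ∑ j ∈ range (progSet N q a).card, (unitRoot r ^ b) ^ (a % q + q * j) := by
  rw [Eqa, progSet_eq_map hq ha, sum_map, card_map, card_range]
  refine sum_congr rfl fun j _ => ?_
  rw [unitRoot_pow_pow, Function.Embedding.coeFn_mk]
  congr 1
  push_cast
  ring

theorem ramanujanC_eq_sum_pow (r n : ℕ) :
    ramanujanC r n = ∑ b ∈ coprimeResidues r, (unitRoot r ^ b) ^ n :=
  sum_congr rfl fun b _ => (unitRoot_pow_pow r b n).symm

theorem exp_sum_second_moment_general (N q r a : ℕ) (hq : 2 ≤ q) (ha : Nat.gcd a q = 1) :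
    ∑ b ∈ (Finset.range r).filter (fun b => Nat.gcd b r = 1),
        Eqa N q a ((b : ℝ) / r) * (starRingEnd ℂ) (Eqa N q a ((b : ℝ) / r)) =
      (r.totient : ℂ) * ((progSet N q a).card : ℂ) +
        2 * ∑ m ∈ Finset.Icc 1 (progSet N q a).card,
          (((progSet N q a).card : ℂ) - (m : ℂ)) * ramanujanC r (q * m) := by
  have hq0 : 0 < q := by omega
  have ha0 : a % q ≠ 0 := fun h => by
    rw [← Nat.gcd_comm, Nat.gcd_rec, h, Nat.gcd_zero_left] at ha
    omega
  set K := (progSet N q a).card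
  set F : ℤ → ℂ := fun d => ∑ b ∈ coprimeResidues r, (unitRoot r ^ b) ^ ((q : ℤ) * d)
  have F_even : ∀ d, F (-d) = F d := fun d => by
    simp only [F, mul_neg]
    exact sum_coprimeResidues_zpow_neg (unitRoot_pow_self r) _
  calc _ = ∑ b ∈ coprimeResidues r, ∑ j ∈ range K, ∑ j' ∈ range K,
          (unitRoot r ^ b) ^ ((q : ℤ) * (j - j')) :=
        sum_congr rfl fun b _ => by
          rw [Eqa_div_eq_sum_range hq0 ha0, sum_pow_mul_conj_sum_pow (by simp [norm_unitRoot])]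
    _ = ∑ j ∈ range K, ∑ j' ∈ range K, F (j - j') := by
        rw [sum_comm]
        exact sum_congr rfl fun _ _ => sum_comm
    _ = K * F 0 + 2 * ∑ m ∈ Icc 1 K, ((K : ℂ) - m) * F m :=
        sum_range_sum_range_sub_of_even F F_even K
    _ = _ := by
        simp only [F, mul_zero, zpow_zero, sum_const, card_coprimeResidues, nsmul_one,
          ramanujanC_eq_sum_pow, ← Nat.cast_mul, zpow_natCast]
        rw [Nat.mul_comm K]

/-- Second moment of the exponential sum over reduced residues mod `r`,
in terms of Ramanujan sums. -/
theorem exp_sum_second_moment (N q r a : ℕ) (hN : 1 ≤ N) (hq : 2 ≤ q) (hr : 1 ≤ r)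
    (hqr : Nat.gcd q r = 1) (ha : Nat.gcd a q = 1) :
    ∑ b ∈ (Finset.range r).filter (fun b => Nat.gcd b r = 1),
        Eqa N q a ((b : ℝ) / r) * (starRingEnd ℂ) (Eqa N q a ((b : ℝ) / r)) =
      (r.totient : ℂ) * ((progSet N q a).card : ℂ) +
        2 * ∑ m ∈ Finset.Icc 1 (progSet N q a).card,
          (((progSet N q a).card : ℂ) - (m : ℂ)) * ramanujanC r (q * m) :=
  exp_sum_second_moment_general N q r a hq ha
end

section
/- Let k ≥ 2 be a fixed integer. There exists a constant C = C(k) > 0 such that for all integers q ≥ 2 and N ≥ 1, every integer a coprime to q, every real y ≥ max(N/q, 2), and all pairwise distinct integers n_1,…,n_k ∈ [1,N] with n_i ≡ a (mod q) for all i: 𝔖({n_1,…,n_k};q) ≤ C (q/φ(q))^k (log y)^{k−1}. -/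
open Finset Filter

/-- Number of residue classes mod `p` occupied by `D`. -/
def vpD (D : Finset ℕ) (p : ℕ) : ℕ := (D.image (· % p)).card

/-- The singular series `𝔖(𝒟;q)`. -/
noncomputable def singSeries (D : Finset ℕ) (q : ℕ) : ℝ :=
  ((q : ℝ) / q.totient) ^ D.card *
    ∏' p : Nat.Primes, if ((p : ℕ) ∣ q) then 1
      else ((1 - 1 / ((p : ℕ) : ℝ))⁻¹) ^ D.card * (1 - (vpD D p : ℝ) / ((p : ℕ) : ℝ))

/-- The uniform Hardy–Littlewood conjecture with exponent saving `δ`. -/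
def HL (δ : ℝ) : Prop :=
  0 < δ ∧ δ < 1 / 2 ∧ ∀ k : ℕ, 1 ≤ k → ∃ C : ℝ, 0 < C ∧
    ∀ q N D : ℕ, 1 ≤ q → 1 ≤ N → 1 ≤ D →
      ∀ 𝒟 : Finset ℕ, 𝒟.card = k → (∀ d ∈ 𝒟, 0 < d ∧ d ≤ D ∧ q ∣ d) →
      |(∑ n ∈ (Finset.Icc 1 N).filter (fun n => Nat.gcd n q = 1),
          ∏ d ∈ 𝒟, ArithmeticFunction.vonMangoldt (n + d)) -
        singSeries 𝒟 q * ((Finset.Icc 1 N).filter (fun n => Nat.gcd n q = 1)).card| ≤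
        C * (((N : ℝ) + D) ^ (1 - δ) : ℝ)

/-- Reduced residues modulo `q`. -/
def residues (q : ℕ) : Finset ℕ := (Finset.range q).filter (fun a => Nat.gcd a q = 1)

/-- Gaussian moments `μ_k`. -/
noncomputable def gaussMoment (k : ℕ) : ℝ :=
  if Even k then (k.factorial : ℝ) / (2 ^ (k / 2) * (k / 2).factorial) else 0

/-- The constant `B_q`. -/
noncomputable def Bq (q : ℕ) : ℝ :=
  1 - Real.eulerMascheroniConstant - Real.log (2 * Real.pi) -
    ∑ p ∈ q.primeFactors, Real.log p / ((p : ℝ) - 1)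

/-! For `p ∤ q`, Bernoulli's inequality bounds the Euler factor `(1 - 1/p)⁻ᵏ (1 - v_p/p)` by
`(1 - 1/p)^-(k - v_p)`, and `k - v_p` is at most the number of `d ∈ 𝒟` congruent mod `p` to a
smaller element `e ∈ 𝒟`. Since `q ∣ d - e` and `p ∤ q`, such a `p` divides
`M_d = ∏_{e < d} (d - e)/q`. So every partial Euler product is at most
`∏_d ∏_{p ∣ M_d} (1 - 1/p)⁻¹ ≤ ∏_d (ω(M_d) + 1)`, because a product of `(1 - 1/p)⁻¹` over `t`
integers `p ≥ 2` is at most `t + 1`. Finally `M_d ≤ yᵏ` gives `ω(M_d) + 1 ≪ k log y`, and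
`M_d = 1` for the least `d`, which leaves `k - 1` factors. -/

lemma one_le_one_sub_one_div_inv {x : ℝ} (hx : 1 < x) : 1 ≤ (1 - 1 / x)⁻¹ := by
  have hpos : 0 < 1 / x := by positivity
  exact (one_le_inv₀ (by rw [sub_pos, div_lt_one (by linarith)]; exact hx)).2 (by linarith)

lemma one_sub_one_div_inv_pow_mul_le {x : ℝ} (hx : 1 < x) {k v : ℕ} (hvk : v ≤ k) :
    (1 - 1 / x)⁻¹ ^ k * (1 - v / x) ≤ (1 - 1 / x)⁻¹ ^ (k - v) := by
  have hu : 0 < 1 - 1 / x := by rw [sub_pos, div_lt_one (by linarith)]; exact hx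
  have bernoulli : 1 - v / x ≤ (1 - 1 / x) ^ v := by
    have hx' : 1 / x ≤ 2 := by rw [div_le_iff₀ (by linarith)]; linarith
    calc 1 - v / x = 1 + v * -(1 / x) := by ring
      _ ≤ (1 + -(1 / x)) ^ v := one_add_mul_le_pow (by linarith) v
      _ = (1 - 1 / x) ^ v := by rw [← sub_eq_add_neg]
  calc (1 - 1 / x)⁻¹ ^ k * (1 - v / x) ≤ (1 - 1 / x)⁻¹ ^ k * (1 - 1 / x) ^ v := by
        gcongr
    _ = (1 - 1 / x)⁻¹ ^ (k - v) := by
        rw [← Nat.sub_add_cancel hvk, pow_add, inv_pow _ v, Nat.add_sub_cancel, mul_assoc,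
          inv_mul_cancel₀ (by positivity), mul_one]

lemma prod_one_sub_one_div_inv_le_card_add_one (t : Finset ℕ) (ht : ∀ p ∈ t, 2 ≤ p) :
    ∏ p ∈ t, (1 - 1 / (p : ℝ))⁻¹ ≤ #t + 1 := by
  induction t using Finset.induction_on_max with
  | empty => simp
  | insert a t hlt ih =>
    have ha2 : 2 ≤ a := ht a (mem_insert_self a t)
    have ha : (2 : ℝ) ≤ a := by exact_mod_cast ha2
    have hat : a ∉ t := fun h => lt_irrefl a (hlt a h)
    have hcard : (#t : ℝ) + 2 ≤ a := by
      have hsub : t ⊆ Ico 2 a := fun p hp =>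
        mem_Ico.2 ⟨ht p (mem_insert_of_mem hp), hlt p hp⟩
      have := card_le_card hsub
      rw [Nat.card_Ico] at this
      have : #t + 2 ≤ a := by omega
      exact_mod_cast this
    rw [prod_insert hat, card_insert_of_notMem hat, one_sub_div (by linarith), inv_div]
    calc (a : ℝ) / (a - 1) * ∏ p ∈ t, (1 - 1 / (p : ℝ))⁻¹ ≤ a / (a - 1) * (#t + 1) := by
          gcongr
          · exact div_nonneg (by linarith) (by linarith)
          · exact ih fun p hp => ht p (mem_insert_of_mem hp)
      _ ≤ ((#t + 1 : ℕ) : ℝ) + 1 := by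
          rw [div_mul_eq_mul_div, div_le_iff₀ (by linarith)]
          push_cast
          nlinarith

lemma card_primeFactors_mul_log_two_le_log {m : ℕ} (hm : m ≠ 0) :
    #m.primeFactors * Real.log 2 ≤ Real.log m := by
  have h : 2 ^ #m.primeFactors ≤ m :=
    calc 2 ^ #m.primeFactors = ∏ _p ∈ m.primeFactors, 2 := by rw [prod_const]
      _ ≤ ∏ p ∈ m.primeFactors, p :=
          prod_le_prod' fun p hp => (Nat.prime_of_mem_primeFactors hp).two_le
      _ ≤ m := Nat.le_of_dvd (Nat.pos_of_ne_zero hm) (Nat.prod_primeFactors_dvd m)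
  rw [← Real.log_pow]
  exact Real.log_le_log (by positivity) (by exact_mod_cast h)

lemma prod_primes_ite_dvd_le (s : Finset Nat.Primes) {m : ℕ} (hm : m ≠ 0) :
    ∏ p ∈ s, (if (p : ℕ) ∣ m then (1 - 1 / ((p : ℕ) : ℝ))⁻¹ else 1) ≤
      #m.primeFactors + 1 := by
  rw [← prod_filter]
  set t := (s.filter fun p : Nat.Primes => (p : ℕ) ∣ m).map
    ⟨fun p : Nat.Primes => (p : ℕ), Subtype.coe_injective⟩
  have ht : t ⊆ m.primeFactors := by
    intro r hr
    obtain ⟨p, hp, rfl⟩ := mem_map.1 hr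
    exact Nat.mem_primeFactors.2 ⟨p.2, (mem_filter.1 hp).2, hm⟩
  calc _ = ∏ p ∈ t, (1 - 1 / (p : ℝ))⁻¹ := by rw [prod_map]; rfl
    _ ≤ #t + 1 := prod_one_sub_one_div_inv_le_card_add_one t fun p hp =>
          (Nat.prime_of_mem_primeFactors (ht hp)).two_le
    _ ≤ #m.primeFactors + 1 := by gcongr

lemma prod_le_pow_card_sub_one {ι : Type*} [DecidableEq ι] {s : Finset ι} {f : ι → ℝ} {c : ℝ}
    (h0 : ∀ i ∈ s, 0 ≤ f i) (hc : ∀ i ∈ s, f i ≤ c) {i₀ : ι} (hi₀ : i₀ ∈ s) (hfi₀ : f i₀ ≤ 1) :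
    ∏ i ∈ s, f i ≤ c ^ (#s - 1) := by
  rw [← mul_prod_erase s f hi₀, ← card_erase_of_mem hi₀, ← one_mul (c ^ _), ← prod_const]
  exact mul_le_mul hfi₀ (prod_le_prod (fun i hi => h0 i (mem_of_mem_erase hi))
    fun i hi => hc i (mem_of_mem_erase hi)) (prod_nonneg fun i hi => h0 i (mem_of_mem_erase hi))
    zero_le_one

def gapProd (D : Finset ℕ) (q d : ℕ) : ℕ := ∏ e ∈ D with e < d, (d - e) / q

section gapProd

variable {D : Finset ℕ} {q : ℕ}

lemma gapProd_min' (hD : D.Nonempty) : gapProd D q (D.min' hD) = 1 :=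
  prod_eq_one fun e he => absurd (mem_filter.1 he).2 (not_lt.2 (D.min'_le e (mem_filter.1 he).1))

lemma gapProd_ne_zero (hq : 0 < q) (hD : ∀ d ∈ D, ∀ e ∈ D, d ≡ e [MOD q]) {d : ℕ} (hd : d ∈ D) :
    gapProd D q d ≠ 0 := by
  refine prod_ne_zero_iff.2 fun e he => ?_
  obtain ⟨he, hed⟩ := mem_filter.1 he
  have hdvd : q ∣ d - e := (Nat.modEq_iff_dvd' hed.le).1 (hD e he d hd)
  exact (Nat.div_pos (Nat.le_of_dvd (by omega) hdvd) hq).ne'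

lemma gapProd_le_pow {y : ℝ} (hy : 1 ≤ y) (hDy : ∀ d ∈ D, (d : ℝ) / q ≤ y) {d : ℕ} (hd : d ∈ D) :
    (gapProd D q d : ℝ) ≤ y ^ #D := by
  have hgap : ∀ e ∈ D.filter (· < d), (((d - e) / q : ℕ) : ℝ) ≤ y := fun e _ =>
    calc (((d - e) / q : ℕ) : ℝ) ≤ ((d - e : ℕ) : ℝ) / q := Nat.cast_div_le
      _ ≤ d / q := by gcongr; exact_mod_cast Nat.sub_le d e
      _ ≤ y := hDy d hd
  calc (gapProd D q d : ℝ) ≤ ∏ _e ∈ D.filter (· < d), y := by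
        rw [gapProd, Nat.cast_prod]
        exact prod_le_prod (fun _ _ => Nat.cast_nonneg _) hgap
    _ ≤ y ^ #D := by rw [prod_const]; exact pow_le_pow_right₀ hy (card_filter_le _ _)

lemma dvd_gapProd_of_modEq {p : ℕ} (hp : p.Prime) (hpq : ¬p ∣ q)
    (hD : ∀ d ∈ D, ∀ e ∈ D, d ≡ e [MOD q]) {d e : ℕ} (hd : d ∈ D) (he : e ∈ D) (hed : e < d)
    (hde : d ≡ e [MOD p]) : p ∣ gapProd D q d := by
  have hq : q ∣ d - e := (Nat.modEq_iff_dvd' hed.le).1 (hD e he d hd)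
  have hp' : p ∣ (d - e) / q * q := by
    rw [Nat.div_mul_cancel hq]; exact (Nat.modEq_iff_dvd' hed.le).1 hde.symm
  exact ((hp.dvd_mul.1 hp').resolve_right hpq).trans
    (dvd_prod_of_mem _ (mem_filter.2 ⟨he, hed⟩))

-- The elements `d` with `p ∤ gapProd D q d` lie in distinct classes mod `p`.
lemma card_sub_vpD_le {p : ℕ} (hp : p.Prime) (hpq : ¬p ∣ q)
    (hD : ∀ d ∈ D, ∀ e ∈ D, d ≡ e [MOD q]) :
    #D - vpD D p ≤ #{d ∈ D | p ∣ gapProd D q d} := by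
  have hinj : Set.InjOn (· % p) ↑({d ∈ D | ¬p ∣ gapProd D q d} : Finset ℕ) := by
    intro d hd e he hde
    simp only [coe_filter, Set.mem_ofPred_eq] at hd he
    by_contra hne
    rcases Nat.lt_or_gt_of_ne hne with hlt | hlt
    · exact he.2 (dvd_gapProd_of_modEq hp hpq hD he.1 hd.1 hlt hde.symm)
    · exact hd.2 (dvd_gapProd_of_modEq hp hpq hD hd.1 he.1 hlt hde)
  have hcard : #{d ∈ D | ¬p ∣ gapProd D q d} ≤ vpD D p := by
    rw [← card_image_of_injOn hinj]
    exact card_le_card (image_subset_image (filter_subset _ _))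
  have := card_filter_add_card_filter_not (s := D) (p ∣ gapProd D q ·)
  omega

end gapProd

noncomputable def singSeriesFactor (D : Finset ℕ) (q : ℕ) (p : Nat.Primes) : ℝ :=
  if (p : ℕ) ∣ q then 1
  else ((1 - 1 / ((p : ℕ) : ℝ))⁻¹) ^ D.card * (1 - (vpD D p : ℝ) / ((p : ℕ) : ℝ))

lemma singSeries_eq_mul_tprod (D : Finset ℕ) (q : ℕ) :
    singSeries D q = ((q : ℝ) / q.totient) ^ #D * ∏' p, singSeriesFactor D q p := rfl

lemma vpD_le_card (D : Finset ℕ) (p : ℕ) : vpD D p ≤ #D := card_image_le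

lemma vpD_le (D : Finset ℕ) {p : ℕ} (hp : 0 < p) : vpD D p ≤ p := by
  have hsub : D.image (· % p) ⊆ range p := fun r hr => by
    obtain ⟨d, -, rfl⟩ := mem_image.1 hr
    exact mem_range.2 (Nat.mod_lt d hp)
  simpa [vpD] using card_le_card hsub

section singSeriesFactor

variable {D : Finset ℕ} {q : ℕ}

lemma singSeriesFactor_nonneg (p : Nat.Primes) : 0 ≤ singSeriesFactor D q p := by
  have hp : (1 : ℝ) < (p : ℕ) := by exact_mod_cast p.2.one_lt
  have hv : (vpD D p : ℝ) ≤ (p : ℕ) := by exact_mod_cast vpD_le D p.2.pos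
  unfold singSeriesFactor
  split_ifs
  · exact zero_le_one
  · exact mul_nonneg (pow_nonneg (zero_le_one.trans (one_le_one_sub_one_div_inv hp)) _)
      (sub_nonneg.2 ((div_le_one (by linarith)).2 hv))

lemma singSeriesFactor_le_prod (hD : ∀ d ∈ D, ∀ e ∈ D, d ≡ e [MOD q]) (p : Nat.Primes) :
    singSeriesFactor D q p ≤
      ∏ d ∈ D, if (p : ℕ) ∣ gapProd D q d then (1 - 1 / ((p : ℕ) : ℝ))⁻¹ else 1 := by
  have hp : (1 : ℝ) < (p : ℕ) := by exact_mod_cast p.2.one_lt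
  have hx := one_le_one_sub_one_div_inv hp
  rw [← prod_filter, prod_const]
  unfold singSeriesFactor
  split_ifs with hpq
  · exact one_le_pow₀ hx
  · calc _ ≤ (1 - 1 / ((p : ℕ) : ℝ))⁻¹ ^ (#D - vpD D p) :=
          one_sub_one_div_inv_pow_mul_le hp (vpD_le_card D p)
      _ ≤ _ := pow_le_pow_right₀ hx (card_sub_vpD_le p.2 hpq hD)

lemma prod_singSeriesFactor_le (hq : 0 < q) (hD : ∀ d ∈ D, ∀ e ∈ D, d ≡ e [MOD q])
    (s : Finset Nat.Primes) :
    ∏ p ∈ s, singSeriesFactor D q p ≤ ∏ d ∈ D, ((#(gapProd D q d).primeFactors : ℝ) + 1) := by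
  have hfactor : ∀ (d : ℕ) (p : Nat.Primes),
      0 ≤ if (p : ℕ) ∣ gapProd D q d then (1 - 1 / ((p : ℕ) : ℝ))⁻¹ else 1 := fun d p => by
    have hp : (1 : ℝ) < (p : ℕ) := by exact_mod_cast p.2.one_lt
    split_ifs
    · exact zero_le_one.trans (one_le_one_sub_one_div_inv hp)
    · exact zero_le_one
  calc ∏ p ∈ s, singSeriesFactor D q p
      ≤ ∏ p ∈ s, ∏ d ∈ D,
          if (p : ℕ) ∣ gapProd D q d then (1 - 1 / ((p : ℕ) : ℝ))⁻¹ else 1 :=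
        prod_le_prod (fun p _ => singSeriesFactor_nonneg p) fun p _ => singSeriesFactor_le_prod hD p
    _ = ∏ d ∈ D, ∏ p ∈ s,
          if (p : ℕ) ∣ gapProd D q d then (1 - 1 / ((p : ℕ) : ℝ))⁻¹ else 1 := prod_comm
    _ ≤ _ := prod_le_prod (fun d _ => prod_nonneg fun p _ => hfactor d p) fun d hd =>
        prod_primes_ite_dvd_le s (gapProd_ne_zero hq hD hd)

lemma tprod_singSeriesFactor_le (hq : 0 < q) (hD : ∀ d ∈ D, ∀ e ∈ D, d ≡ e [MOD q]) :
    ∏' p, singSeriesFactor D q p ≤ ∏ d ∈ D, ((#(gapProd D q d).primeFactors : ℝ) + 1) :=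
  tprod_le_of_prod_le' (one_le_prod fun d _ => by simp) (prod_singSeriesFactor_le hq hD)

lemma card_primeFactors_gapProd_add_one_le (hq : 0 < q) (hD : ∀ d ∈ D, ∀ e ∈ D, d ≡ e [MOD q])
    {y : ℝ} (hy : 2 ≤ y) (hDy : ∀ d ∈ D, (d : ℝ) / q ≤ y) {d : ℕ} (hd : d ∈ D) :
    (#(gapProd D q d).primeFactors : ℝ) + 1 ≤ (#D + 1) / Real.log 2 * Real.log y := by
  have hlog2 : 0 < Real.log 2 := Real.log_pos one_lt_two
  have hlogy : Real.log 2 ≤ Real.log y := Real.log_le_log two_pos hy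
  have hne := gapProd_ne_zero hq hD hd
  have hω := card_primeFactors_mul_log_two_le_log hne
  have hlog : Real.log (gapProd D q d) ≤ #D * Real.log y := by
    rw [← Real.log_pow]
    exact Real.log_le_log (by positivity) (gapProd_le_pow (by linarith) hDy hd)
  rw [div_mul_eq_mul_div, le_div_iff₀ hlog2]
  linarith

end singSeriesFactor

theorem singSeries_le_of_modEq {D : Finset ℕ} {q : ℕ} (hq : 0 < q)
    (hD : ∀ d ∈ D, ∀ e ∈ D, d ≡ e [MOD q]) {y : ℝ} (hy : 2 ≤ y)
    (hDy : ∀ d ∈ D, (d : ℝ) / q ≤ y) :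
    singSeries D q ≤
      ((q : ℝ) / q.totient) ^ #D * ((#D + 1) / Real.log 2 * Real.log y) ^ (#D - 1) := by
  rw [singSeries_eq_mul_tprod]
  gcongr
  refine (tprod_singSeriesFactor_le hq hD).trans ?_
  rcases D.eq_empty_or_nonempty with rfl | hne
  · simp
  · refine prod_le_pow_card_sub_one (fun _ _ => by positivity)
      (fun d hd => card_primeFactors_gapProd_add_one_le hq hD hy hDy hd) (D.min'_mem hne) ?_
    simp [gapProd_min' hne]

theorem singSeries_pointwise_bound_general (k : ℕ) :
    ∃ C : ℝ, 0 < C ∧ ∀ q N a : ℕ, 2 ≤ q → 1 ≤ N → Nat.gcd a q = 1 →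
      ∀ y : ℝ, max ((N : ℝ) / q) 2 ≤ y →
      ∀ n : Fin k → ℕ, Function.Injective n →
        (∀ i, n i ∈ Finset.Icc 1 N ∧ n i % q = a % q) →
        singSeries (Finset.image n Finset.univ) q ≤
          C * ((q : ℝ) / q.totient) ^ k * (Real.log y) ^ (k - 1) := by
  refine ⟨((k + 1) / Real.log 2) ^ (k - 1), by positivity, ?_⟩
  intro q N a hq _ _ y hy n hinj hn
  have hcard : #(image n univ) = k := by
    rw [card_image_of_injective _ hinj, card_univ, Fintype.card_fin]
  have hD : ∀ d ∈ image n univ, ∀ e ∈ image n univ, d ≡ e [MOD q] := by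
    simp only [mem_image, mem_univ, true_and]
    rintro _ ⟨i, rfl⟩ _ ⟨j, rfl⟩
    exact (hn i).2.trans (hn j).2.symm
  have hDy : ∀ d ∈ image n univ, (d : ℝ) / q ≤ y := by
    simp only [mem_image, mem_univ, true_and]
    rintro _ ⟨i, rfl⟩
    calc (n i : ℝ) / q ≤ N / q := by gcongr; exact_mod_cast (mem_Icc.1 (hn i).1).2
      _ ≤ y := (le_max_left _ _).trans hy
  calc _ ≤ _ := singSeries_le_of_modEq (by omega) hD ((le_max_right _ _).trans hy) hDy
    _ = _ := by rw [hcard, mul_pow]; ring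

/-- Pointwise upper bound for the singular series of a tuple in a progression
(equation (2.4)). -/
theorem singSeries_pointwise_bound (k : ℕ) (hk : 2 ≤ k) :
    ∃ C : ℝ, 0 < C ∧ ∀ q N a : ℕ, 2 ≤ q → 1 ≤ N → Nat.gcd a q = 1 →
      ∀ y : ℝ, max ((N : ℝ) / q) 2 ≤ y →
      ∀ n : Fin k → ℕ, Function.Injective n →
        (∀ i, n i ∈ Finset.Icc 1 N ∧ n i % q = a % q) →
        singSeries (Finset.image n Finset.univ) q ≤
          C * ((q : ℝ) / q.totient) ^ k * (Real.log y) ^ (k - 1) :=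
  singSeries_pointwise_bound_general k
end
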